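/- arXiv:1310.4132 — 10 statements merged into one kernel-verified Lean document; each statement's English description precedes it below -/
import Mathlib

section
/- Suppose R and Q are symmetric idempotent matrices with R Q R = λ R for a scalar λ. If λ ≠ 0, then Q ▷ R := λ⁻¹ Q R Q is a symmetric idempotent matrix. -/
open Matrix BigOperators
open scoped Classical

/-- If `R` and `Q` are symmetric idempotents with `RQR = λ R` and `λ ≠ 0`,
then `Q ▷ R = λ⁻¹ • QRQ` is a symmetric idempotent. -/
theorem stmt_4 {n : ℕ} (R Q : Matrix (Fin n) (Fin n) ℝ) (lam : ℝ)
    (hRsym : Rᵀ = R) (hRidem : R * R = R)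
    (hQsym : Qᵀ = Q) (hQidem : Q * Q = Q)
    (hbal : R * Q * R = lam • R) (hlam : lam ≠ 0) :
    (lam⁻¹ • (Q * R * Q))ᵀ = lam⁻¹ • (Q * R * Q) ∧
    (lam⁻¹ • (Q * R * Q)) * (lam⁻¹ • (Q * R * Q)) = lam⁻¹ • (Q * R * Q) := by
  constructor
  · simp [Matrix.transpose_smul, Matrix.transpose_mul, hQsym, hRsym, mul_assoc]
  · have key : (Q * R * Q) * (Q * R * Q) = lam • (Q * R * Q) := by
      have h1 : (Q * R * Q) * (Q * R * Q) = Q * (R * Q * R) * Q := by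
        calc (Q * R * Q) * (Q * R * Q) = Q * R * (Q * Q) * R * Q := by
              noncomm_ring
          _ = Q * (R * Q * R) * Q := by rw [hQidem]; noncomm_ring
      rw [h1, hbal, Matrix.mul_smul, Matrix.smul_mul]
    rw [Matrix.smul_mul, Matrix.mul_smul, key, smul_smul, smul_smul]
    congr 1
    field_simp
end

section
/- Let Q be a symmetric idempotent and R a finite set of symmetric, mutually orthogonal idempotents such that for each R ∈ R, R Q R = λ_{QR} R and R₁ Q R₂ = 0 for distinct R₁, R₂ ∈ R. Set Q ⊢ R := Q − Σ'_{R} λ_{QR}⁻¹ Q R Q, the sum over R with λ_{QR} ≠ 0. Then Q ⊢ R is symmetric and idempotent, and is orthogonal to each Q ▷ R = λ_{QR}⁻¹ QRQ. -/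
open Matrix BigOperators
open scoped Classical

/-- In the structure-balance setting, the residual operator
`Q ⊢ R = Q − ∑'_{R : λ_{QR} ≠ 0} λ_{QR}⁻¹ • Q R Q` is a symmetric idempotent
orthogonal to each `Q ▷ R = λ_{QR}⁻¹ • Q R Q`. -/
theorem stmt_6 {n : ℕ} {ι : Type*} [Fintype ι]
    (Q : Matrix (Fin n) (Fin n) ℝ)
    (hQsym : Qᵀ = Q) (hQidem : Q * Q = Q)
    (R : ι → Matrix (Fin n) (Fin n) ℝ)
    (hRsym : ∀ i, (R i)ᵀ = R i)
    (hRidem : ∀ i, R i * R i = R i)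
    (hRorth : ∀ i j, i ≠ j → R i * R j = 0)
    (lam : ι → ℝ)
    (hbal : ∀ i, R i * Q * R i = lam i • R i)
    (hcross : ∀ i j, i ≠ j → R i * Q * R j = 0) :
    (Q - ∑ i ∈ Finset.univ.filter fun i => lam i ≠ 0,
        (lam i)⁻¹ • (Q * R i * Q))ᵀ
      = Q - ∑ i ∈ Finset.univ.filter fun i => lam i ≠ 0,
        (lam i)⁻¹ • (Q * R i * Q) ∧
    (Q - ∑ i ∈ Finset.univ.filter fun i => lam i ≠ 0,
        (lam i)⁻¹ • (Q * R i * Q)) *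
      (Q - ∑ i ∈ Finset.univ.filter fun i => lam i ≠ 0,
        (lam i)⁻¹ • (Q * R i * Q))
      = Q - ∑ i ∈ Finset.univ.filter fun i => lam i ≠ 0,
        (lam i)⁻¹ • (Q * R i * Q) ∧
    ∀ i, lam i ≠ 0 →
      (Q - ∑ j ∈ Finset.univ.filter fun j => lam j ≠ 0,
          (lam j)⁻¹ • (Q * R j * Q)) * ((lam i)⁻¹ • (Q * R i * Q)) = 0 := by
  set S := Finset.univ.filter fun i => lam i ≠ 0 with hS
  set P : ι → Matrix (Fin n) (Fin n) ℝ := fun i => (lam i)⁻¹ • (Q * R i * Q) with hP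
  -- key multiplicative facts
  have hQP : ∀ i, Q * P i = P i := by
    intro i
    simp only [hP, Matrix.mul_smul]
    congr 1
    calc Q * (Q * R i * Q) = (Q * Q) * R i * Q := by noncomm_ring
    _ = Q * R i * Q := by rw [hQidem]
  have hPQ : ∀ i, P i * Q = P i := by
    intro i
    simp only [hP, Matrix.smul_mul]
    congr 1
    calc Q * R i * Q * Q = Q * R i * (Q * Q) := by noncomm_ring
    _ = Q * R i * Q := by rw [hQidem]
  have hPP : ∀ i j, lam i ≠ 0 → P i * P j = if i = j then P i else 0 := by
    intro i j hi
    have hcore : (Q * R i * Q) * (Q * R j * Q) = Q * (R i * Q * R j) * Q := by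
      calc (Q * R i * Q) * (Q * R j * Q) = Q * R i * (Q * Q) * R j * Q := by noncomm_ring
      _ = Q * (R i * Q * R j) * Q := by rw [hQidem]; noncomm_ring
    by_cases h : i = j
    · subst h
      simp only [if_pos rfl, hP, Matrix.smul_mul, Matrix.mul_smul, smul_smul]
      rw [hcore, hbal i]
      rw [Matrix.mul_smul, Matrix.smul_mul, smul_smul]
      congr 1
      field_simp
    · simp only [if_neg h, hP, Matrix.smul_mul, Matrix.mul_smul, smul_smul]
      rw [hcore, hcross i j h]
      simp
  have hPsym : ∀ i, (P i)ᵀ = P i := by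
    intro i
    simp only [hP, Matrix.transpose_smul, Matrix.transpose_mul, hQsym, hRsym]
    congr 1
    noncomm_ring
  refine ⟨?_, ?_, ?_⟩
  · rw [Matrix.transpose_sub, hQsym, Matrix.transpose_sum]
    congr 1
    exact Finset.sum_congr rfl fun i _ => hPsym i
  · show (Q - ∑ i ∈ S, P i) * (Q - ∑ i ∈ S, P i) = Q - ∑ i ∈ S, P i
    have h1 : Q * ∑ i ∈ S, P i = ∑ i ∈ S, P i := by
      rw [Matrix.mul_sum]
      exact Finset.sum_congr rfl fun i _ => hQP i
    have h3 : (∑ i ∈ S, P i) * Q = ∑ i ∈ S, P i := by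
      rw [Matrix.sum_mul]
      exact Finset.sum_congr rfl fun i _ => hPQ i
    have h2 : (∑ i ∈ S, P i) * ∑ j ∈ S, P j = ∑ i ∈ S, P i := by
      rw [Matrix.sum_mul]
      refine Finset.sum_congr rfl fun i hi => ?_
      have hi' : lam i ≠ 0 := by simpa [hS] using hi
      rw [Matrix.mul_sum, Finset.sum_congr rfl (fun j _ => hPP i j hi')]
      simp [Finset.sum_ite_eq, hi]
    rw [sub_mul, mul_sub, mul_sub, hQidem, h1, h2, h3]
    abel
  · intro i hi
    show (Q - ∑ j ∈ S, P j) * P i = 0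
    have : (∑ j ∈ S, P j) * P i = P i := by
      rw [Matrix.sum_mul]
      rw [Finset.sum_congr rfl (fun j (hj : j ∈ S) => hPP j i (by simpa [hS] using hj))]
      simp [Finset.sum_ite_eq', hS, hi]
    rw [sub_mul, hQP i, this, sub_self]
end

section
/- Under the model Y = W + X_h τ with E[W] = 0 and Cov(W) = Σ_Q η_Q Q (the Q being symmetric mutually orthogonal idempotents summing to I), and structure balance RQR = λ_{QR}R with λ_{QR} ≠ 0 and RQ I_R = λ_{QR}R where I_R = Σ_R R: the estimator λ_{QR}⁻¹ R Q Y is an unbiased estimator of R X_h τ, i.e., E[λ_{QR}⁻¹ R Q Y] = R X_h τ. -/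
open Matrix BigOperators MeasureTheory
open scoped Classical

/-- Under the randomization-based model `E[Y] = X_h τ` with structure balance
`R Q I_R = λ_{QR} R`, the estimator `λ_{QR}⁻¹ R Q Y` is unbiased for
`R X_h τ`. -/
theorem stmt_10 {n m : ℕ} {Ωm : Type*} [MeasureSpace Ωm]
    (Y : Ωm → Fin n → ℝ)
    (hInt : ∀ i, Integrable fun ω => Y ω i)
    (Xh : Matrix (Fin n) (Fin m) ℝ) (τ : Fin m → ℝ)
    (hEY : ∀ i, (∫ ω, Y ω i) = Xh.mulVec τ i)
    (R Q IR : Matrix (Fin n) (Fin n) ℝ)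
    (hRsym : Rᵀ = R) (hRidem : R * R = R)
    (hQsym : Qᵀ = Q) (hQidem : Q * Q = Q)
    (hRIR : R * IR = R)
    (hfix : IR.mulVec (Xh.mulVec τ) = Xh.mulVec τ)
    (lam : ℝ) (hlam : lam ≠ 0)
    (hbal : R * Q * IR = lam • R) :
    ∀ i, (∫ ω, (lam⁻¹ • (R * Q).mulVec (Y ω)) i)
      = R.mulVec (Xh.mulVec τ) i := by
  intro i
  have key : (∫ ω, (R * Q).mulVec (Y ω) i) = (R * Q).mulVec (Xh.mulVec τ) i := by
    simp only [mulVec, dotProduct]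
    rw [integral_finset_sum]
    · exact Finset.sum_congr rfl fun j _ => by
        rw [integral_const_mul, hEY]; rfl
    · exact fun j _ => (hInt j).const_mul _
  have h1 : (∫ ω, (lam⁻¹ • (R * Q).mulVec (Y ω)) i)
      = lam⁻¹ * (R * Q).mulVec (Xh.mulVec τ) i := by
    simp only [Pi.smul_apply, smul_eq_mul]
    rw [integral_const_mul, key]
  rw [h1]
  have h2 : (R * Q).mulVec (Xh.mulVec τ) = lam • R.mulVec (Xh.mulVec τ) := by
    calc (R * Q).mulVec (Xh.mulVec τ)
        = (R * Q).mulVec (IR.mulVec (Xh.mulVec τ)) := by rw [hfix]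
      _ = (R * Q * IR).mulVec (Xh.mulVec τ) := by rw [mulVec_mulVec]
      _ = lam • R.mulVec (Xh.mulVec τ) := by rw [hbal, smul_mulVec]
  rw [h2]
  simp [Pi.smul_apply, smul_eq_mul, ← mul_assoc, inv_mul_cancel₀ hlam]
end

section
/- With Cov(Y) = Σ_{Q*} η_{Q*} Q* and structure balance as above, the variance matrix of the estimator λ_{QR}⁻¹ R Q Y equals (η_Q / λ_{QR}) R. -/
open Matrix BigOperators
open scoped Classical

/-- With `Cov(Y) = ∑ η_{Q*} • Q*` and structure balance, the variance matrix
`A Cov(Y) Aᵀ` of the estimator `A Y` with `A = λ_{QR}⁻¹ • R Q` equals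
`(η_Q / λ_{QR}) • R`. -/
theorem stmt_11 {n : ℕ} {ι : Type*} [Fintype ι]
    (Qm : ι → Matrix (Fin n) (Fin n) ℝ)
    (hsym : ∀ i, (Qm i)ᵀ = Qm i)
    (hidem : ∀ i, Qm i * Qm i = Qm i)
    (horth : ∀ i j, i ≠ j → Qm i * Qm j = 0)
    (R : Matrix (Fin n) (Fin n) ℝ)
    (hRsym : Rᵀ = R) (hRidem : R * R = R)
    (lam : ι → ℝ)
    (hbal : ∀ i, R * Qm i * R = lam i • R)
    (η : ι → ℝ) (i₀ : ι) (hlam : lam i₀ ≠ 0) :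
    ((lam i₀)⁻¹ • (R * Qm i₀)) * (∑ i, η i • Qm i) *
        ((lam i₀)⁻¹ • (R * Qm i₀))ᵀ
      = (η i₀ / lam i₀) • R := by
  have hterm : ∀ i, R * Qm i₀ * (η i • Qm i) * (Qm i₀ * R)
      = η i • (R * (Qm i₀ * Qm i * Qm i₀) * R) := by
    intro i
    simp only [mul_smul_comm, smul_mul_assoc, mul_assoc]
  have key : (R * Qm i₀) * (∑ i, η i • Qm i) * (Qm i₀ * R)
      = (η i₀ * lam i₀) • R := by
    rw [Matrix.mul_sum, Matrix.sum_mul]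
    rw [Finset.sum_eq_single i₀]
    · rw [hterm, hidem, hidem, hbal, smul_smul]
    · intro i _ hne
      rw [hterm, horth i₀ i (Ne.symm hne)]
      simp
    · intro h; exact absurd (Finset.mem_univ i₀) h
  rw [transpose_smul, transpose_mul, hsym, hRsym]
  simp only [smul_mul_assoc, mul_smul_comm, smul_smul]
  rw [key, smul_smul]
  congr 1
  field_simp
end

section
/- The GLS combined estimator over strata: if Cov(Y) = Σ_Q η_Q Q with all η_Q > 0, RQR = λ_{QR}R for all Q ∈ Q, and θ_R := Σ_Q λ_{QR} η_Q⁻¹ > 0, then the estimator θ_R⁻¹ Σ_Q η_Q⁻¹ R Q Y has variance matrix θ_R⁻¹ R. -/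
open Matrix BigOperators
open scoped Classical

/-- The GLS combined estimator `θ_R⁻¹ ∑_Q η_Q⁻¹ R Q Y` has variance matrix
`θ_R⁻¹ • R`, where `θ_R = ∑_Q λ_{QR}/η_Q`. -/
theorem stmt_12 {n : ℕ} {ι : Type*} [Fintype ι]
    (Qm : ι → Matrix (Fin n) (Fin n) ℝ)
    (hsym : ∀ i, (Qm i)ᵀ = Qm i)
    (hidem : ∀ i, Qm i * Qm i = Qm i)
    (horth : ∀ i j, i ≠ j → Qm i * Qm j = 0)
    (hsum : ∑ i, Qm i = 1)
    (R : Matrix (Fin n) (Fin n) ℝ)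
    (hRsym : Rᵀ = R) (hRidem : R * R = R)
    (lam : ι → ℝ)
    (hbal : ∀ i, R * Qm i * R = lam i • R)
    (η : ι → ℝ) (hη : ∀ i, 0 < η i)
    (θ : ℝ) (hθ : θ = ∑ i, lam i / η i) (hθpos : 0 < θ) :
    (θ⁻¹ • ∑ i, (η i)⁻¹ • (R * Qm i)) * (∑ i, η i • Qm i) *
        (θ⁻¹ • ∑ i, (η i)⁻¹ • (R * Qm i))ᵀ
      = θ⁻¹ • R := by
  have hmid : (∑ i, (η i)⁻¹ • (R * Qm i)) * (∑ i, η i • Qm i) = R := by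
    rw [Finset.sum_mul_sum]
    have : ∀ i ∈ Finset.univ, ∑ j, ((η i)⁻¹ • (R * Qm i)) * (η j • Qm j)
        = R * Qm i := by
      intro i _
      rw [Finset.sum_eq_single i]
      · rw [smul_mul_assoc, mul_smul_comm, smul_smul, inv_mul_cancel₀ (hη i).ne',
          one_smul, mul_assoc, hidem]
      · intro j _ hji
        rw [smul_mul_assoc, mul_smul_comm, mul_assoc, horth i j (Ne.symm hji),
          mul_zero, smul_zero, smul_zero]
      · simp
    rw [Finset.sum_congr rfl this, ← Matrix.mul_sum, hsum, mul_one]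
  have htr : (∑ i, (η i)⁻¹ • (R * Qm i))ᵀ = ∑ i, (η i)⁻¹ • (Qm i * R) := by
    rw [Matrix.transpose_sum]
    congr 1; ext i
    rw [Matrix.transpose_smul, Matrix.transpose_mul, hsym, hRsym]
  have hright : R * (∑ i, (η i)⁻¹ • (Qm i * R)) = θ • R := by
    rw [Matrix.mul_sum]
    have : ∀ i ∈ Finset.univ, R * ((η i)⁻¹ • (Qm i * R)) = (lam i / η i) • R := by
      intro i _
      rw [mul_smul_comm, ← mul_assoc, hbal, smul_smul, div_eq_inv_mul, mul_comm (η i)⁻¹]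
    rw [Finset.sum_congr rfl this, ← Finset.sum_smul, ← hθ]
  calc (θ⁻¹ • ∑ i, (η i)⁻¹ • (R * Qm i)) * (∑ i, η i • Qm i) *
        (θ⁻¹ • ∑ i, (η i)⁻¹ • (R * Qm i))ᵀ
      = (θ⁻¹ * θ⁻¹) • (((∑ i, (η i)⁻¹ • (R * Qm i)) * (∑ i, η i • Qm i)) *
          (∑ i, (η i)⁻¹ • (Qm i * R))) := by
        rw [Matrix.transpose_smul, htr, smul_mul_assoc, smul_mul_assoc,
          mul_smul_comm, smul_smul]
    _ = (θ⁻¹ * θ⁻¹) • (θ • R) := by rw [hmid, hright]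
    _ = θ⁻¹ • R := by
        rw [smul_smul, mul_assoc, inv_mul_cancel₀ hθpos.ne', mul_one]
end

section
/- In the three-tiered setting with V = Σ_P ξ_P P + r Σ_Q η_Q Q, where the P are symmetric mutually orthogonal idempotents summing to I and each Q satisfies PQP = λ_{PQ}(P▷Q): for any P ∈ P, P V P = Σ'_{Q: λ_{PQ}≠0} (ξ_P + rλ_{PQ}η_Q)(P▷Q) + ξ_P(P ⊢ Q), where P▷Q = λ_{PQ}⁻¹PQP and P ⊢ Q = P − Σ'_Q P▷Q. -/
open Matrix BigOperators
open scoped Classical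

/-- In the three-tiered setting with `V = ∑ ξ_P • P + r ∑ η_Q • Q`, for each
`P` one has
`P V P = ∑'_{Q : λ_{PQ}≠0} (ξ_P + rλ_{PQ}η_Q) • (P▷Q) + ξ_P • (P ⊢ Q)`. -/
theorem stmt_13 {n : ℕ} {ιP ιQ : Type*} [Fintype ιP] [Fintype ιQ]
    (P : ιP → Matrix (Fin n) (Fin n) ℝ)
    (hPsym : ∀ i, (P i)ᵀ = P i)
    (hPidem : ∀ i, P i * P i = P i)
    (hPorth : ∀ i j, i ≠ j → P i * P j = 0)
    (hPsum : ∑ i, P i = 1)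
    (Qm : ιQ → Matrix (Fin n) (Fin n) ℝ)
    (hQsym : ∀ j, (Qm j)ᵀ = Qm j)
    (hQidem : ∀ j, Qm j * Qm j = Qm j)
    (hQorth : ∀ j k, j ≠ k → Qm j * Qm k = 0)
    (lam : ιP → ιQ → ℝ)
    (hbal : ∀ i j, Qm j * P i * Qm j = lam i j • Qm j)
    (hcross : ∀ i j k, j ≠ k → Qm j * P i * Qm k = 0)
    (ξ : ιP → ℝ) (η : ιQ → ℝ) (r : ℝ) (hr : 0 < r)
    (i : ιP) :
    P i * (∑ i', ξ i' • P i' + r • ∑ j, η j • Qm j) * P i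
      = (∑ j ∈ Finset.univ.filter fun j => lam i j ≠ 0,
            (ξ i + r * lam i j * η j) • ((lam i j)⁻¹ • (P i * Qm j * P i)))
        + ξ i • (P i - ∑ j ∈ Finset.univ.filter fun j => lam i j ≠ 0,
            (lam i j)⁻¹ • (P i * Qm j * P i)) := by
  -- vanishing of P Q P when lam = 0
  have hA0 : ∀ j, lam i j = 0 → P i * Qm j * P i = 0 := by
    intro j h0
    set A := P i * Qm j * P i with hA
    have hsq : A * A = 0 := by
      have : A * A = P i * (Qm j * P i * Qm j) * P i := by
        rw [hA]
        rw [show P i * Qm j * P i * (P i * Qm j * P i)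
            = P i * Qm j * (P i * P i) * Qm j * P i by
          simp only [Matrix.mul_assoc]]
        rw [hPidem]
        simp only [Matrix.mul_assoc]
      rw [this, hbal, h0, zero_smul, Matrix.mul_zero, Matrix.zero_mul]
    have hAt : Aᴴ = A := by
      have h1 : Aᴴ = Aᵀ := by
        ext a b; simp [Matrix.conjTranspose_apply]
      rw [h1, hA]
      simp [Matrix.transpose_mul, hPsym, hQsym, Matrix.mul_assoc]
    have : Aᴴ * A = 0 := by rw [hAt, hsq]
    exact Matrix.conjTranspose_mul_self_eq_zero.mp this
  -- P i * P i' * P i = if i' = i then P i else 0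
  have hPiP : ∀ i', P i * P i' * P i = if i' = i then P i else 0 := by
    intro i'
    by_cases h : i' = i
    · subst h; rw [hPidem, hPidem]; simp
    · rw [hPorth i i' (Ne.symm h), Matrix.zero_mul]; simp [h]
  -- expand LHS
  have hLHS : P i * (∑ i', ξ i' • P i' + r • ∑ j, η j • Qm j) * P i
      = ξ i • P i + ∑ j, (r * η j) • (P i * Qm j * P i) := by
    rw [Matrix.mul_add, Matrix.add_mul]
    congr 1
    · rw [Finset.mul_sum, Finset.sum_mul]
      rw [show (∑ i', P i * (ξ i' • P i') * P i) = ∑ i', ξ i' • (P i * P i' * P i) by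
        refine Finset.sum_congr rfl fun i' _ => ?_
        rw [Matrix.mul_smul, Matrix.smul_mul]]
      simp only [hPiP]
      simp
    · simp only [Matrix.mul_smul, Matrix.smul_mul, Finset.mul_sum, Finset.sum_mul,
        Finset.smul_sum, smul_smul, Matrix.mul_assoc]
  rw [hLHS]
  -- restrict the sum to the filter
  have hsum2 : (∑ j, (r * η j) • (P i * Qm j * P i))
      = ∑ j ∈ Finset.univ.filter fun j => lam i j ≠ 0,
          (r * η j) • (P i * Qm j * P i) := by
    rw [← Finset.sum_filter_add_sum_filter_not Finset.univ
        (fun j => lam i j ≠ 0) (fun j => (r * η j) • (P i * Qm j * P i))]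
    rw [show (∑ j ∈ Finset.univ.filter fun j => ¬ lam i j ≠ 0,
        (r * η j) • (P i * Qm j * P i)) = 0 by
      refine Finset.sum_eq_zero fun j hj => ?_
      simp only [Finset.mem_filter, not_not] at hj
      rw [hA0 j hj.2, smul_zero]]
    rw [add_zero]
  rw [hsum2]
  -- simplify RHS
  rw [smul_sub, Finset.smul_sum]
  rw [show (∑ j ∈ Finset.univ.filter fun j => lam i j ≠ 0,
      (ξ i + r * lam i j * η j) • ((lam i j)⁻¹ • (P i * Qm j * P i)))
      = ∑ j ∈ Finset.univ.filter fun j => lam i j ≠ 0,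
          ((r * η j) • (P i * Qm j * P i) + ξ i • (lam i j)⁻¹ • (P i * Qm j * P i)) by
    refine Finset.sum_congr rfl fun j hj => ?_
    simp only [Finset.mem_filter] at hj
    rw [smul_smul, smul_smul, ← add_smul]
    have hne := hj.2
    congr 1
    field_simp
    ring]
  rw [Finset.sum_add_distrib]
  abel
end

section
/- Covariance between projections: with V = Σ_P ξ_P P + r Σ_Q η_Q Q as above and distinct P₁, P₂ ∈ P with λ_{P₁Q}, λ_{P₂Q} both nonzero for some Q ∈ Q, one has (P₁▷Q) V (P₂▷Q) = r η_Q P₁ Q P₂, which has the same rank as Q. -/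
open Matrix BigOperators
open scoped Classical

lemma rank_smul_aux {n : ℕ} (c : ℝ) (hc : c ≠ 0) (A : Matrix (Fin n) (Fin n) ℝ) :
    (c • A).rank = A.rank := by
  have key : ∀ (d : ℝ) (B : Matrix (Fin n) (Fin n) ℝ), (d • B).rank ≤ B.rank := by
    intro d B
    have : d • B = (d • (1 : Matrix (Fin n) (Fin n) ℝ)) * B := by
      rw [smul_mul_assoc, one_mul]
    rw [this]
    exact Matrix.rank_mul_le_right _ _
  refine le_antisymm (key c A) ?_
  have h : A = c⁻¹ • (c • A) := by rw [smul_smul, inv_mul_cancel₀ hc, one_smul]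
  calc A.rank = (c⁻¹ • (c • A)).rank := by rw [← h]
    _ ≤ (c • A).rank := key _ _

/-- Covariance between projections in distinct strata: with
`V = ∑ ξ_P • P + r ∑ η_Q • Q` and distinct `P₁, P₂` both nonorthogonal to
some `Q`, one has `(P₁▷Q) V (P₂▷Q) = r η_Q • P₁ Q P₂`, which has the same
rank as `Q`. -/
theorem stmt_14 {n : ℕ} {ιP ιQ : Type*} [Fintype ιP] [Fintype ιQ]
    (P : ιP → Matrix (Fin n) (Fin n) ℝ)
    (hPsym : ∀ i, (P i)ᵀ = P i)
    (hPidem : ∀ i, P i * P i = P i)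
    (hPorth : ∀ i j, i ≠ j → P i * P j = 0)
    (hPsum : ∑ i, P i = 1)
    (Qm : ιQ → Matrix (Fin n) (Fin n) ℝ)
    (hQsym : ∀ j, (Qm j)ᵀ = Qm j)
    (hQidem : ∀ j, Qm j * Qm j = Qm j)
    (hQorth : ∀ j k, j ≠ k → Qm j * Qm k = 0)
    (lam : ιP → ιQ → ℝ)
    (hbal : ∀ i j, Qm j * P i * Qm j = lam i j • Qm j)
    (hcross : ∀ i j k, j ≠ k → Qm j * P i * Qm k = 0)
    (ξ : ιP → ℝ) (η : ιQ → ℝ) (r : ℝ) (hr : 0 < r)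
    (i₁ i₂ : ιP) (hne : i₁ ≠ i₂) (j : ιQ)
    (hlam₁ : lam i₁ j ≠ 0) (hlam₂ : lam i₂ j ≠ 0) (hηj : η j ≠ 0) :
    ((lam i₁ j)⁻¹ • (P i₁ * Qm j * P i₁)) *
        (∑ i, ξ i • P i + r • ∑ k, η k • Qm k) *
        ((lam i₂ j)⁻¹ • (P i₂ * Qm j * P i₂))
      = (r * η j) • (P i₁ * Qm j * P i₂) ∧
    ((r * η j) • (P i₁ * Qm j * P i₂)).rank = (Qm j).rank := by
  set X := P i₁ * Qm j * P i₁ with hX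
  set Y := P i₂ * Qm j * P i₂ with hY
  have hXP : ∀ i, X * P i = if i = i₁ then X else 0 := by
    intro i
    by_cases h : i = i₁
    · subst h
      rw [hX, mul_assoc, hPidem, if_pos rfl]
    · rw [hX, mul_assoc, hPorth i₁ i (fun e => h e.symm), mul_zero, if_neg h]
  have hXQ : ∀ k, X * Qm k = if k = j then lam i₁ j • (P i₁ * Qm j) else 0 := by
    intro k
    by_cases h : k = j
    · subst h
      rw [hX, mul_assoc, mul_assoc, ← mul_assoc (Qm k), hbal, mul_smul_comm, if_pos rfl]
    · rw [hX, mul_assoc, mul_assoc, ← mul_assoc (Qm j), hcross i₁ j k (fun e => h e.symm),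
        mul_zero, if_neg h]
  have h1 : X * (∑ i, ξ i • P i) = ξ i₁ • X := by
    rw [Finset.mul_sum]
    rw [Finset.sum_eq_single i₁]
    · rw [mul_smul_comm, hXP, if_pos rfl]
    · intro i _ hi
      rw [mul_smul_comm, hXP, if_neg hi, smul_zero]
    · intro h; exact absurd (Finset.mem_univ i₁) h
  have h2 : X * (∑ k, η k • Qm k) = (η j * lam i₁ j) • (P i₁ * Qm j) := by
    rw [Finset.mul_sum]
    rw [Finset.sum_eq_single j]
    · rw [mul_smul_comm, hXQ, if_pos rfl, smul_smul]
    · intro k _ hk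
      rw [mul_smul_comm, hXQ, if_neg hk, smul_zero]
    · intro h; exact absurd (Finset.mem_univ j) h
  have hXY : X * Y = 0 := by
    have h12 : P i₁ * P i₂ = 0 := hPorth i₁ i₂ hne
    have : X * Y = P i₁ * Qm j * (P i₁ * P i₂) * (Qm j * P i₂) := by
      rw [hX, hY]; simp only [mul_assoc]
    rw [this, h12, mul_zero, zero_mul]
  have hPQY : (P i₁ * Qm j) * Y = lam i₂ j • (P i₁ * Qm j * P i₂) := by
    rw [hY, mul_assoc, ← mul_assoc (Qm j), ← mul_assoc (Qm j), hbal, smul_mul_assoc,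
      mul_smul_comm, mul_assoc]
  have hXV : X * (∑ i, ξ i • P i + r • ∑ k, η k • Qm k)
      = ξ i₁ • X + (r * (η j * lam i₁ j)) • (P i₁ * Qm j) := by
    rw [mul_add, h1, mul_smul_comm, h2, smul_smul]
  have key : ((lam i₁ j)⁻¹ • X) * (∑ i, ξ i • P i + r • ∑ k, η k • Qm k) *
      ((lam i₂ j)⁻¹ • Y) = (r * η j) • (P i₁ * Qm j * P i₂) := by
    rw [smul_mul_assoc, smul_mul_assoc, mul_smul_comm, hXV, add_mul,
      smul_mul_assoc, hXY, smul_zero, zero_add, smul_mul_assoc, hPQY]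
    rw [smul_smul, smul_smul, smul_smul]
    congr 1
    field_simp
  refine ⟨key, ?_⟩
  have hrη : r * η j ≠ 0 := mul_ne_zero (ne_of_gt hr) hηj
  rw [rank_smul_aux _ hrη]
  set M := P i₁ * Qm j * P i₂ with hM
  have hle : M.rank ≤ (Qm j).rank := by
    calc M.rank ≤ (P i₁ * Qm j).rank := Matrix.rank_mul_le_left _ _
      _ ≤ (Qm j).rank := Matrix.rank_mul_le_right _ _
  have hQMQ : Qm j * M * Qm j = (lam i₁ j * lam i₂ j) • Qm j := by
    rw [hM, ← mul_assoc, ← mul_assoc, hbal, smul_mul_assoc, smul_mul_assoc, hbal,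
      smul_smul]
  have hge : (Qm j).rank ≤ M.rank := by
    have := rank_smul_aux (lam i₁ j * lam i₂ j) (mul_ne_zero hlam₁ hlam₂) (Qm j)
    calc (Qm j).rank = ((lam i₁ j * lam i₂ j) • Qm j).rank := this.symm
      _ = (Qm j * M * Qm j).rank := by rw [hQMQ]
      _ ≤ (Qm j * M).rank := Matrix.rank_mul_le_left _ _
      _ ≤ M.rank := Matrix.rank_mul_le_right _ _
  exact le_antisymm hle hge
end

section
/- With V = Σ_P ξ_P P + rΣ_Q η_Q Q (structure balanced, all ξ_P > 0), set α_Q = Σ_P λ_{PQ}/ξ_P. Then V⁻¹ = Σ_P ξ_P⁻¹ P − Σ_P Σ_Q Σ_{P*} (rη_Q/(1 + rη_Q α_Q)) (ξ_P ξ_{P*})⁻¹ P Q P*, provided 1 + rη_Q α_Q ≠ 0 for all Q; that is, V times the right-hand side equals the identity. -/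
open Matrix BigOperators
open scoped Classical

/-- Explicit inverse of `V = ∑ ξ_P • P + r ∑ η_Q • Q`:
with `α_Q = ∑_P λ_{PQ}/ξ_P` and `1 + rη_Qα_Q ≠ 0` for all `Q`,
`V (∑_P ξ_P⁻¹ • P − ∑_{P,Q,P*} (rη_Q/(1+rη_Qα_Q)) (ξ_Pξ_{P*})⁻¹ • P Q P*) = 1`. -/
theorem stmt_15 {n : ℕ} {ιP ιQ : Type*} [Fintype ιP] [Fintype ιQ]
    (P : ιP → Matrix (Fin n) (Fin n) ℝ)
    (hPsym : ∀ i, (P i)ᵀ = P i)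
    (hPidem : ∀ i, P i * P i = P i)
    (hPorth : ∀ i j, i ≠ j → P i * P j = 0)
    (hPsum : ∑ i, P i = 1)
    (Qm : ιQ → Matrix (Fin n) (Fin n) ℝ)
    (hQsym : ∀ j, (Qm j)ᵀ = Qm j)
    (hQidem : ∀ j, Qm j * Qm j = Qm j)
    (hQorth : ∀ j k, j ≠ k → Qm j * Qm k = 0)
    (lam : ιP → ιQ → ℝ)
    (hbal : ∀ i j, Qm j * P i * Qm j = lam i j • Qm j)
    (hcross : ∀ i j k, j ≠ k → Qm j * P i * Qm k = 0)
    (ξ : ιP → ℝ) (hξ : ∀ i, 0 < ξ i)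
    (η : ιQ → ℝ) (r : ℝ) (hr : 0 < r)
    (α : ιQ → ℝ) (hα : ∀ j, α j = ∑ i, lam i j / ξ i)
    (hden : ∀ j, 1 + r * η j * α j ≠ 0) :
    (∑ i, ξ i • P i + r • ∑ j, η j • Qm j) *
      ((∑ i, (ξ i)⁻¹ • P i) -
        ∑ i, ∑ j, ∑ k,
          (r * η j / (1 + r * η j * α j)) •
            ((ξ i * ξ k)⁻¹ • (P i * Qm j * P k)))
      = 1 := by
  -- abbreviations via have lemmas
  have hAPi : ∀ i, (∑ i', ξ i' • P i') * P i = ξ i • P i := by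
    intro i
    rw [Finset.sum_mul, Finset.sum_eq_single i]
    · rw [smul_mul_assoc, hPidem]
    · intro k _ hk
      rw [smul_mul_assoc, hPorth k i hk, smul_zero]
    · simp
  -- key1 : A * S = 1
  have key1 : (∑ i, ξ i • P i) * (∑ i, (ξ i)⁻¹ • P i) = 1 := by
    rw [Finset.mul_sum]
    have h : ∀ k, (∑ i, ξ i • P i) * ((ξ k)⁻¹ • P k) = P k := by
      intro k
      rw [mul_smul_comm, hAPi, smul_smul, inv_mul_cancel₀ (hξ k).ne', one_smul]
    simp_rw [h]
    exact hPsum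
  -- A acting on a triple product
  have hA_term : ∀ i j k, (∑ i', ξ i' • P i') * (P i * Qm j * P k)
      = ξ i • (P i * Qm j * P k) := by
    intro i j k
    rw [mul_assoc (P i), ← mul_assoc _ (P i), hAPi, smul_mul_assoc, ← mul_assoc]
  -- key2 : A * T
  have key2 : (∑ i', ξ i' • P i') *
      (∑ i, ∑ j, ∑ k, (r * η j / (1 + r * η j * α j)) •
        ((ξ i * ξ k)⁻¹ • (P i * Qm j * P k)))
      = ∑ j, ∑ k, ((r * η j / (1 + r * η j * α j)) * (ξ k)⁻¹) • (Qm j * P k) := by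
    rw [Finset.mul_sum]
    simp_rw [Finset.mul_sum, mul_smul_comm, hA_term, smul_smul]
    rw [Finset.sum_comm]
    refine Finset.sum_congr rfl fun j _ => ?_
    rw [Finset.sum_comm]
    refine Finset.sum_congr rfl fun k _ => ?_
    have hsc : ∀ i : ιP, r * η j / (1 + r * η j * α j) * ((ξ i * ξ k)⁻¹ * ξ i)
        = (r * η j / (1 + r * η j * α j)) * (ξ k)⁻¹ := by
      intro i
      rw [mul_inv]
      field_simp [hden j, (hξ i).ne', (hξ k).ne']
    simp_rw [hsc]
    rw [← Finset.smul_sum]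
    have hsum : ∑ i, P i * Qm j * P k = Qm j * P k := by
      rw [← Finset.sum_mul, ← Finset.sum_mul, hPsum, one_mul]
    rw [hsum]
  -- key3 : rB * S
  have key3 : (r • ∑ j, η j • Qm j) * (∑ i, (ξ i)⁻¹ • P i)
      = ∑ j, ∑ k, (r * η j * (ξ k)⁻¹) • (Qm j * P k) := by
    rw [smul_mul_assoc, Finset.sum_mul, Finset.smul_sum]
    refine Finset.sum_congr rfl fun j _ => ?_
    rw [Finset.mul_sum, Finset.smul_sum]
    refine Finset.sum_congr rfl fun k _ => ?_
    rw [smul_mul_assoc, mul_smul_comm, smul_smul, smul_smul, mul_assoc]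
  -- B acting on a triple product
  have hB_term : ∀ i j k, (∑ j', η j' • Qm j') * (P i * Qm j * P k)
      = (η j * lam i j) • (Qm j * P k) := by
    intro i j k
    rw [Finset.sum_mul, Finset.sum_eq_single j]
    · rw [smul_mul_assoc, ← mul_assoc, ← mul_assoc (Qm j) (P i) (Qm j), hbal,
        smul_mul_assoc, smul_smul]
    · intro j' _ hj'
      rw [smul_mul_assoc, ← mul_assoc, ← mul_assoc, hcross i j' j hj', zero_mul, smul_zero]
    · simp
  -- key4 : rB * T
  have key4 : (r • ∑ j', η j' • Qm j') *
      (∑ i, ∑ j, ∑ k, (r * η j / (1 + r * η j * α j)) •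
        ((ξ i * ξ k)⁻¹ • (P i * Qm j * P k)))
      = ∑ j, ∑ k, (r * η j * α j * (r * η j / (1 + r * η j * α j)) * (ξ k)⁻¹) •
          (Qm j * P k) := by
    rw [smul_mul_assoc, Finset.mul_sum, Finset.smul_sum]
    simp_rw [Finset.mul_sum, Finset.smul_sum, mul_smul_comm, hB_term, smul_smul]
    rw [Finset.sum_comm]
    refine Finset.sum_congr rfl fun j _ => ?_
    rw [Finset.sum_comm]
    refine Finset.sum_congr rfl fun k _ => ?_
    rw [← Finset.sum_smul]
    congr 1
    have hgen : ∀ c : ℝ, ∑ i, r * (c * ((ξ i * ξ k)⁻¹ * (η j * lam i j)))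
        = r * η j * α j * c * (ξ k)⁻¹ := by
      intro c
      have hterm : ∀ i : ιP, r * (c * ((ξ i * ξ k)⁻¹ * (η j * lam i j)))
          = (r * η j * c * (ξ k)⁻¹) * (lam i j / ξ i) := by
        intro i
        rw [mul_inv]
        field_simp [(hξ i).ne', (hξ k).ne']
      simp_rw [hterm]
      rw [← Finset.mul_sum, ← hα]
      ring
    exact hgen _
  -- combine the scalar coefficients
  have keyscal : (∑ j, ∑ k, (r * η j * (ξ k)⁻¹) • (Qm j * P k))
      = (∑ j, ∑ k, ((r * η j / (1 + r * η j * α j)) * (ξ k)⁻¹) • (Qm j * P k))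
        + ∑ j, ∑ k, (r * η j * α j * (r * η j / (1 + r * η j * α j)) * (ξ k)⁻¹) •
            (Qm j * P k) := by
    rw [← Finset.sum_add_distrib]
    refine Finset.sum_congr rfl fun j _ => ?_
    rw [← Finset.sum_add_distrib]
    refine Finset.sum_congr rfl fun k _ => ?_
    rw [← add_smul]
    congr 1
    field_simp [hden j, (hξ k).ne']
  rw [add_mul, mul_sub, mul_sub, key1, key2, key3, key4, keyscal]
  abel
end

section
/- In the chain setting, for R a treatment idempotent with R = R I_Q = Σ_Q R Q and RQR = λ_{QR}R, one has R V⁻¹ R = θ_R R where θ_R = Σ_Q α_Q λ_{QR}/(1 + rη_Q α_Q), with V⁻¹ as given by the explicit inverse formula. -/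
open Matrix BigOperators
open scoped Classical

/-!
Write `R = ∑_Q R Q = ∑_Q Q R`. Inserting these expansions next to `R` and using the block
structure `Q P Q* = 0` (`Q ≠ Q*`), `Q P Q = λ_{PQ} Q` and `R Q P Q R = λ_{PQ} λ_{QR} R`, every
term of `R V⁻¹ R` collapses to a multiple of `R`:
`R P R = (∑_Q λ_{PQ} λ_{QR}) R` and `R P Q P* R = λ_{PQ} λ_{P*Q} λ_{QR} R`.
Summing with the weights of `V⁻¹` gives `∑_Q λ_{QR} (α_Q − rη_Q α_Q² / (1 + rη_Q α_Q)) R = θ_R R`.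
-/

section Sandwich

variable {A K ι : Type*} [Semiring A] [CommSemiring K] [Algebra K A] [Fintype ι]

theorem mul_eq_mul_mul_of_sum_mul_eq {Q : ι → A} {R : A} (hR : ∑ k, Q k * R = R)
    (M : A) (j : ι) (hM : ∀ k, k ≠ j → M * Q k * R = 0) : M * R = M * Q j * R := by
  conv_lhs => rw [← hR, Finset.mul_sum]
  simp_rw [← mul_assoc]
  exact Finset.sum_eq_single j (fun k _ hk => hM k hk) (by simp)

theorem mul_eq_mul_mul_of_sum_mul_eq' {Q : ι → A} {R : A} (hR : ∑ k, R * Q k = R)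
    (M : A) (j : ι) (hM : ∀ k, k ≠ j → R * Q k * M = 0) : R * M = R * Q j * M := by
  conv_lhs => rw [← hR, Finset.sum_mul]
  exact Finset.sum_eq_single j (fun k _ hk => hM k hk) (by simp)

variable {ιP : Type*} {P : ιP → A} {Q : ι → A} {R : A} {lam : ιP → ι → K} {μ : ι → K}

theorem mul_mul_mul_eq_smul (hR : ∑ k, Q k * R = R)
    (hcross : ∀ i j k, j ≠ k → R * Q j * P i * Q k * R = 0)
    (hmix : ∀ i j, R * Q j * P i * Q j * R = (lam i j * μ j) • R) (i : ιP) (j : ι) :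
    R * Q j * P i * R = (lam i j * μ j) • R := by
  rw [mul_eq_mul_mul_of_sum_mul_eq hR _ j fun k hk => hcross i j k hk.symm, hmix]

theorem mul_mul_eq_sum_smul (hR : ∑ k, Q k * R = R) (hR' : ∑ k, R * Q k = R)
    (hcross : ∀ i j k, j ≠ k → R * Q j * P i * Q k * R = 0)
    (hmix : ∀ i j, R * Q j * P i * Q j * R = (lam i j * μ j) • R) (i : ιP) :
    R * P i * R = (∑ j, lam i j * μ j) • R := by
  calc R * P i * R = (∑ j, R * Q j) * P i * R := by rw [hR']
    _ = ∑ j, R * Q j * P i * R := by simp only [Finset.sum_mul]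
    _ = (∑ j, lam i j * μ j) • R := by
      simp_rw [mul_mul_mul_eq_smul hR hcross hmix, Finset.sum_smul]

theorem mul_sandwich_mul_eq_smul (hR : ∑ k, Q k * R = R) (hR' : ∑ k, R * Q k = R)
    (hbal : ∀ i j, Q j * P i * Q j = lam i j • Q j)
    (hQcross : ∀ i j k, j ≠ k → Q j * P i * Q k = 0)
    (hcross : ∀ i j k, j ≠ k → R * Q j * P i * Q k * R = 0)
    (hmix : ∀ i j, R * Q j * P i * Q j * R = (lam i j * μ j) • R) (i k : ιP) (j : ι) :
    R * (P i * Q j * P k) * R = (lam i j * lam k j * μ j) • R := by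
  have hreassoc : ∀ j', R * Q j' * (P i * Q j * P k * R) = R * (Q j' * P i * Q j) * (P k * R) := by
    intro j'; simp only [mul_assoc]
  rw [mul_assoc, mul_eq_mul_mul_of_sum_mul_eq' hR' _ j fun j' hj' => by
    rw [hreassoc, hQcross i j' j hj', mul_zero, zero_mul]]
  rw [hreassoc, hbal, mul_smul_comm, smul_mul_assoc, ← mul_assoc,
    mul_mul_mul_eq_smul hR hcross hmix, smul_smul, mul_assoc]

end Sandwich

theorem sum_inv_mul_sum_sub_sum_eq_sum_div {K ιP ιQ : Type*} [Field K] [Fintype ιP]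
    [Fintype ιQ] (ξ : ιP → K) (lam : ιP → ιQ → K) (μ c α : ιQ → K)
    (hα : ∀ j, α j = ∑ i, lam i j / ξ i) (hden : ∀ j, 1 + c j * α j ≠ 0) :
    ∑ i, (ξ i)⁻¹ * ∑ j, lam i j * μ j -
        ∑ i, ∑ j, ∑ k, c j / (1 + c j * α j) * (ξ i * ξ k)⁻¹ * (lam i j * lam k j * μ j) =
      ∑ j, α j * μ j / (1 + c j * α j) := by
  have hlin : ∑ i, (ξ i)⁻¹ * ∑ j, lam i j * μ j = ∑ j, α j * μ j := by
    simp_rw [Finset.mul_sum, hα, Finset.sum_mul]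
    rw [Finset.sum_comm]
    simp only [div_eq_inv_mul, mul_assoc]
  have hquad : ∑ i, ∑ j, ∑ k, c j / (1 + c j * α j) * (ξ i * ξ k)⁻¹ * (lam i j * lam k j * μ j)
      = ∑ j, c j / (1 + c j * α j) * α j * α j * μ j := by
    rw [Finset.sum_comm]
    refine Finset.sum_congr rfl fun j _ => ?_
    simp_rw [hα j, Finset.mul_sum, Finset.sum_mul]
    refine Finset.sum_congr rfl fun i _ => Finset.sum_congr rfl fun k _ => ?_
    rw [mul_inv]
    ring
  rw [hlin, hquad, ← Finset.sum_sub_distrib]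
  refine Finset.sum_congr rfl fun j _ => ?_
  rw [div_mul_eq_mul_div, div_mul_eq_mul_div, div_mul_eq_mul_div, sub_div' (hden j)]
  ring

theorem stmt_16_general {n : ℕ} {ιP ιQ : Type*} [Fintype ιP] [Fintype ιQ]
    (P : ιP → Matrix (Fin n) (Fin n) ℝ)
    (Qm : ιQ → Matrix (Fin n) (Fin n) ℝ)
    (hQsym : ∀ j, (Qm j)ᵀ = Qm j)
    (lam : ιP → ιQ → ℝ)
    (hbal : ∀ i j, Qm j * P i * Qm j = lam i j • Qm j)
    (hcross : ∀ i j k, j ≠ k → Qm j * P i * Qm k = 0)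
    (ξ : ιP → ℝ)
    (η : ιQ → ℝ) (r : ℝ)
    (α : ιQ → ℝ) (hα : ∀ j, α j = ∑ i, lam i j / ξ i)
    (hden : ∀ j, 1 + r * η j * α j ≠ 0)
    (R : Matrix (Fin n) (Fin n) ℝ)
    (hRsym : Rᵀ = R)
    (lamQR : ιQ → ℝ)
    (hRsum : ∑ j, R * Qm j = R)
    (hRcross : ∀ i j k, j ≠ k → R * Qm j * P i * Qm k * R = 0)
    (hRmix : ∀ i j, R * Qm j * P i * Qm j * R = (lam i j * lamQR j) • R) :
    R * ((∑ i, (ξ i)⁻¹ • P i) -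
          ∑ i, ∑ j, ∑ k,
            (r * η j / (1 + r * η j * α j)) •
              ((ξ i * ξ k)⁻¹ • (P i * Qm j * P k))) * R
      = (∑ j, α j * lamQR j / (1 + r * η j * α j)) • R := by
  have hRsum' : ∑ j, Qm j * R = R := by
    simpa [transpose_sum, transpose_mul, hQsym, hRsym] using congrArg transpose hRsum
  simp only [Matrix.mul_sub, Matrix.sub_mul, Matrix.mul_sum, Matrix.sum_mul,
    Matrix.mul_smul, Matrix.smul_mul,
    mul_mul_eq_sum_smul hRsum' hRsum hRcross hRmix,
    mul_sandwich_mul_eq_smul hRsum' hRsum hbal hcross hRcross hRmix, smul_smul,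
    ← Finset.sum_smul, ← sub_smul]
  congr 1
  exact sum_inv_mul_sum_sub_sum_eq_sum_div ξ lam lamQR (fun j => r * η j) α hα hden

/-- For a treatment idempotent `R` with `R = ∑_Q R Q` and `RQR = λ_{QR} R`,
one has `R V⁻¹ R = θ_R • R` with
`θ_R = ∑_Q α_Q λ_{QR}/(1 + rη_Qα_Q)`, where `V⁻¹` is the explicit inverse
`∑_P ξ_P⁻¹ • P − ∑_{P,Q,P*} (rη_Q/(1+rη_Qα_Q)) (ξ_Pξ_{P*})⁻¹ • P Q P*`. -/
theorem stmt_16 {n : ℕ} {ιP ιQ : Type*} [Fintype ιP] [Fintype ιQ]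
    (P : ιP → Matrix (Fin n) (Fin n) ℝ)
    (hPsym : ∀ i, (P i)ᵀ = P i)
    (hPidem : ∀ i, P i * P i = P i)
    (hPorth : ∀ i j, i ≠ j → P i * P j = 0)
    (hPsum : ∑ i, P i = 1)
    (Qm : ιQ → Matrix (Fin n) (Fin n) ℝ)
    (hQsym : ∀ j, (Qm j)ᵀ = Qm j)
    (hQidem : ∀ j, Qm j * Qm j = Qm j)
    (hQorth : ∀ j k, j ≠ k → Qm j * Qm k = 0)
    (lam : ιP → ιQ → ℝ)
    (hbal : ∀ i j, Qm j * P i * Qm j = lam i j • Qm j)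
    (hcross : ∀ i j k, j ≠ k → Qm j * P i * Qm k = 0)
    (ξ : ιP → ℝ) (hξ : ∀ i, 0 < ξ i)
    (η : ιQ → ℝ) (r : ℝ) (hr : 0 < r)
    (α : ιQ → ℝ) (hα : ∀ j, α j = ∑ i, lam i j / ξ i)
    (hden : ∀ j, 1 + r * η j * α j ≠ 0)
    (R : Matrix (Fin n) (Fin n) ℝ)
    (hRsym : Rᵀ = R) (hRidem : R * R = R)
    (lamQR : ιQ → ℝ)
    (hRbal : ∀ j, R * Qm j * R = lamQR j • R)
    (hRsum : ∑ j, R * Qm j = R)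
    (hRcross : ∀ i j k, j ≠ k → R * Qm j * P i * Qm k * R = 0)
    (hRmix : ∀ i j, R * Qm j * P i * Qm j * R = (lam i j * lamQR j) • R) :
    R * ((∑ i, (ξ i)⁻¹ • P i) -
          ∑ i, ∑ j, ∑ k,
            (r * η j / (1 + r * η j * α j)) •
              ((ξ i * ξ k)⁻¹ • (P i * Qm j * P k))) * R
      = (∑ j, α j * lamQR j / (1 + r * η j * α j)) • R :=
  stmt_16_general P Qm hQsym lam hbal hcross ξ η r α hα hden R hRsym lamQR hRsum hRcross hRmix
end

section
/- If Q ∈ Q is totally confounded with P (λ_{PQ} = 1) and Q is orthogonal in relation to P, then Q commutes with P: QP = PQ = Q, and in the orthogonal case V = Σ_Q (ξ_{c(Q)} + rη_Q) Q + Σ_P ξ_P (P ⊢ Q), exhibiting the images of these idempotents as eigenspaces of V. -/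
/-!
For symmetric idempotents `P`, `Q` one has `(QP - Q)(QP - Q)ᵀ = QPQ - Q` and `(QP)(QP)ᵀ = QPQ`,
and a real matrix `A` with `A Aᵀ = 0` vanishes. Hence `λ_{PQ} = 1` forces `QP = Q` and
`λ_{PQ} = 0` forces `QP = 0`; transposing gives `PQ = Q`, resp. `PQ = 0`. Once every `Q` sits
under its `c(Q)` and is annihilated by the other `P`s, multiplying `V` by `Q` or by `P ⊢ Q` is a
bookkeeping computation with orthogonal idempotents.
-/

open Matrix BigOperators
open scoped Classical

open Finset

theorem IsSelfAdjoint.star_mul_eq {S : Type*} [Mul S] [StarMul S] {a b : S}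
    (ha : IsSelfAdjoint a) (hb : IsSelfAdjoint b) : star (a * b) = b * a := by
  rw [star_mul, ha.star_eq, hb.star_eq]

namespace Matrix

variable {m R : Type*} [Fintype m] [NonUnitalRing R] [StarRing R] {P Q : Matrix m m R}

theorem isStarProjection_of_transpose_eq [TrivialStar R] (hsym : Pᵀ = P) (hidem : P * P = P) :
    IsStarProjection P :=
  ⟨hidem, by rw [IsSelfAdjoint, star_eq_conjTranspose, conjTranspose_eq_transpose_of_trivial, hsym]⟩

variable [PartialOrder R] [StarOrderedRing R] [NoZeroDivisors R]

theorem IsStarProjection.mul_eq_self_of_mul_mul_eq_self (hQ : IsStarProjection Q)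
    (hP : IsStarProjection P) (h : Q * P * Q = Q) : Q * P = Q ∧ P * Q = Q := by
  have hgram : (Q * P - Q) * (Q * P - Q)ᴴ = 0 := by
    have hQPPQ : Q * P * (P * Q) = Q * P * Q := by
      rw [mul_assoc Q, ← mul_assoc P, hP.isIdempotentElem.eq, ← mul_assoc]
    rw [← star_eq_conjTranspose, star_sub, hQ.isSelfAdjoint.star_mul_eq hP.isSelfAdjoint,
      hQ.isSelfAdjoint.star_eq, sub_mul, mul_sub, mul_sub, hQPPQ, h, ← mul_assoc, h,
      hQ.isIdempotentElem.eq, sub_self]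
  have hQP : Q * P = Q := sub_eq_zero.mp (self_mul_conjTranspose_eq_zero.mp hgram)
  refine ⟨hQP, ?_⟩
  rw [← hQ.isSelfAdjoint.star_mul_eq hP.isSelfAdjoint, hQP, hQ.isSelfAdjoint.star_eq]

theorem IsStarProjection.mul_eq_zero_of_mul_mul_eq_zero (hQ : IsStarProjection Q)
    (hP : IsStarProjection P) (h : Q * P * Q = 0) : Q * P = 0 ∧ P * Q = 0 := by
  have hgram : (Q * P) * (Q * P)ᴴ = 0 := by
    rw [← star_eq_conjTranspose, hQ.isSelfAdjoint.star_mul_eq hP.isSelfAdjoint, mul_assoc Q,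
      ← mul_assoc P, hP.isIdempotentElem.eq, ← mul_assoc, h]
  have hQP : Q * P = 0 := self_mul_conjTranspose_eq_zero.mp hgram
  refine ⟨hQP, ?_⟩
  rw [← hQ.isSelfAdjoint.star_mul_eq hP.isSelfAdjoint, hQP, star_zero]

end Matrix

namespace Confounding

variable {R A ιP ιQ : Type*} [Semiring R] [Ring A] [Module R A] [Fintype ιP] [Fintype ιQ]
  {P : ιP → A} {Q : ιQ → A} {c : ιQ → ιP}

/-- The paper's `P ⊢ Q`. -/
noncomputable def residual (P : ιP → A) (Q : ιQ → A) (c : ιQ → ιP) (i : ιP) : A :=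
  P i - ∑ j ∈ univ.filter fun j => c j = i, Q j

/-- The paper's `V`. -/
def variance (P : ιP → A) (Q : ιQ → A) (ξ : ιP → R) (η : ιQ → R) (r : R) : A :=
  ∑ i, ξ i • P i + r • ∑ j, η j • Q j

theorem variance_eq_sum_add_sum_residual (ξ : ιP → R) (η : ιQ → R) (r : R) :
    variance P Q ξ η r
      = ∑ j, (ξ (c j) + r * η j) • Q j + ∑ i, ξ i • residual P Q c i := by
  have hfiber : ∑ i, ξ i • ∑ j ∈ univ.filter fun j => c j = i, Q j = ∑ j, ξ (c j) • Q j := by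
    rw [← sum_fiberwise univ c fun j => ξ (c j) • Q j]
    refine sum_congr rfl fun i _ => ?_
    rw [smul_sum]
    exact sum_congr rfl fun j hj => by rw [(mem_filter.mp hj).2]
  simp only [variance, residual, smul_sub, sum_sub_distrib]
  rw [hfiber]
  simp only [add_smul, sum_add_distrib, smul_sum, mul_smul]
  abel

variable [IsScalarTower R A A]

theorem sum_smul_mul_of_mul_eq_zero {ι : Type*} [Fintype ι] (e : ι → A) (a : ι → R) (x : A)
    (k : ι) (h : ∀ i, i ≠ k → e i * x = 0) : (∑ i, a i • e i) * x = a k • (e k * x) := by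
  rw [sum_mul, sum_eq_single k (fun i _ hi => by rw [smul_mul_assoc, h i hi, smul_zero])
    (fun hk => absurd (mem_univ k) hk), smul_mul_assoc]

theorem variance_mul_Q (ξ : ιP → R) (η : ιQ → R) (r : R) (hQ : OrthogonalIdempotents Q)
    (hPQ : ∀ j, P (c j) * Q j = Q j) (hPQ0 : ∀ j i, i ≠ c j → P i * Q j = 0) (j : ιQ) :
    variance P Q ξ η r * Q j = (ξ (c j) + r * η j) • Q j := by
  rw [variance, add_mul, sum_smul_mul_of_mul_eq_zero P ξ _ (c j) (hPQ0 j), hPQ, smul_mul_assoc,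
    sum_smul_mul_of_mul_eq_zero Q η _ j (fun k hk => hQ.ortho hk), (hQ.idem j).eq, add_smul,
    mul_smul]

theorem variance_mul_P (ξ : ιP → R) (η : ιQ → R) (r : R) (hP : OrthogonalIdempotents P)
    (hQP : ∀ j, Q j * P (c j) = Q j) (hQP0 : ∀ j i, i ≠ c j → Q j * P i = 0) (i : ιP) :
    variance P Q ξ η r * P i = ξ i • P i + r • ∑ j ∈ univ.filter fun j => c j = i, η j • Q j := by
  have hfiber : ∀ j, η j • (Q j * P i) = if c j = i then η j • Q j else 0 := by
    intro j
    split_ifs with hj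
    · rw [← hj, hQP]
    · rw [hQP0 j i (Ne.symm hj), smul_zero]
  rw [variance, add_mul, sum_smul_mul_of_mul_eq_zero P ξ _ i (fun k hk => hP.ortho hk),
    (hP.idem i).eq, smul_mul_assoc, sum_mul, sum_filter]
  simp only [smul_mul_assoc, hfiber]

theorem variance_mul_residual (ξ : ιP → R) (η : ιQ → R) (r : R) (hP : OrthogonalIdempotents P)
    (hQ : OrthogonalIdempotents Q) (hPQ : ∀ j, P (c j) * Q j = Q j)
    (hPQ0 : ∀ j i, i ≠ c j → P i * Q j = 0) (hQP : ∀ j, Q j * P (c j) = Q j)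
    (hQP0 : ∀ j i, i ≠ c j → Q j * P i = 0) (i : ιP) :
    variance P Q ξ η r * residual P Q c i = ξ i • residual P Q c i := by
  have hfiber : ∀ j ∈ univ.filter fun j => c j = i,
      variance P Q ξ η r * Q j = ξ i • Q j + r • η j • Q j := by
    intro j hj
    rw [variance_mul_Q ξ η r hQ hPQ hPQ0, (mem_filter.mp hj).2, add_smul, mul_smul]
  rw [residual, mul_sub, variance_mul_P ξ η r hP hQP hQP0, mul_sum, sum_congr rfl hfiber,
    sum_add_distrib, smul_sub, smul_sum, smul_sum]
  abel

end Confounding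

theorem stmt_19_general {n : ℕ} {ιP ιQ : Type*} [Fintype ιP] [Fintype ιQ]
    (P : ιP → Matrix (Fin n) (Fin n) ℝ)
    (hPsym : ∀ i, (P i)ᵀ = P i)
    (hPidem : ∀ i, P i * P i = P i)
    (hPorth : ∀ i j, i ≠ j → P i * P j = 0)
    (Qm : ιQ → Matrix (Fin n) (Fin n) ℝ)
    (hQsym : ∀ j, (Qm j)ᵀ = Qm j)
    (hQidem : ∀ j, Qm j * Qm j = Qm j)
    (hQorth : ∀ j k, j ≠ k → Qm j * Qm k = 0)
    (c : ιQ → ιP)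
    (hconf : ∀ j, Qm j * P (c j) * Qm j = Qm j)
    (hzero : ∀ j i, i ≠ c j → Qm j * P i * Qm j = 0)
    (ξ : ιP → ℝ) (η : ιQ → ℝ) (r : ℝ) :
    (∀ j, Qm j * P (c j) = Qm j ∧ P (c j) * Qm j = Qm j) ∧
    (∑ i, ξ i • P i + r • ∑ j, η j • Qm j
      = ∑ j, (ξ (c j) + r * η j) • Qm j
        + ∑ i, ξ i • (P i - ∑ j ∈ Finset.univ.filter fun j => c j = i, Qm j)) ∧
    (∀ j, (∑ i, ξ i • P i + r • ∑ j', η j' • Qm j') * Qm j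
        = (ξ (c j) + r * η j) • Qm j) ∧
    (∀ i, (∑ i', ξ i' • P i' + r • ∑ j, η j • Qm j) *
          (P i - ∑ j ∈ Finset.univ.filter fun j => c j = i, Qm j)
        = ξ i • (P i - ∑ j ∈ Finset.univ.filter fun j => c j = i, Qm j)) := by
  have hPproj i := isStarProjection_of_transpose_eq (hPsym i) (hPidem i)
  have hQproj j := isStarProjection_of_transpose_eq (hQsym j) (hQidem j)
  have hcomm j := (hQproj j).mul_eq_self_of_mul_mul_eq_self (hPproj (c j)) (hconf j)
  have hvanish j i (hi : i ≠ c j) :=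
    (hQproj j).mul_eq_zero_of_mul_mul_eq_zero (hPproj i) (hzero j i hi)
  have hP : OrthogonalIdempotents P := ⟨hPidem, fun i j h => hPorth i j h⟩
  have hQ : OrthogonalIdempotents Qm := ⟨hQidem, fun j k h => hQorth j k h⟩
  exact ⟨hcomm, Confounding.variance_eq_sum_add_sum_residual ξ η r,
    Confounding.variance_mul_Q ξ η r hQ (fun j => (hcomm j).2) fun j i hi => (hvanish j i hi).2,
    Confounding.variance_mul_residual ξ η r hP hQ (fun j => (hcomm j).2)
      (fun j i hi => (hvanish j i hi).2) (fun j => (hcomm j).1) fun j i hi => (hvanish j i hi).1⟩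

/-- If `Q` is orthogonal in relation to `P` (each `Q` totally confounded with
a unique `P = c(Q)`, i.e. `λ_{c(Q),Q} = 1` and `λ_{P',Q} = 0` otherwise), then
each `Q` commutes with `c(Q)`: `Q P = P Q = Q`, and the variance matrix
decomposes as
`V = ∑_Q (ξ_{c(Q)} + rη_Q) • Q + ∑_P ξ_P • (P ⊢ Q)`, whose idempotents'
images are eigenspaces of `V`. -/
theorem stmt_19 {n : ℕ} {ιP ιQ : Type*} [Fintype ιP] [Fintype ιQ]
    (P : ιP → Matrix (Fin n) (Fin n) ℝ)
    (hPsym : ∀ i, (P i)ᵀ = P i)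
    (hPidem : ∀ i, P i * P i = P i)
    (hPorth : ∀ i j, i ≠ j → P i * P j = 0)
    (hPsum : ∑ i, P i = 1)
    (Qm : ιQ → Matrix (Fin n) (Fin n) ℝ)
    (hQsym : ∀ j, (Qm j)ᵀ = Qm j)
    (hQidem : ∀ j, Qm j * Qm j = Qm j)
    (hQorth : ∀ j k, j ≠ k → Qm j * Qm k = 0)
    (c : ιQ → ιP)
    (hconf : ∀ j, Qm j * P (c j) * Qm j = Qm j)
    (hzero : ∀ j i, i ≠ c j → Qm j * P i * Qm j = 0)
    (ξ : ιP → ℝ) (η : ιQ → ℝ) (r : ℝ) (hr : 0 < r) :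
    (∀ j, Qm j * P (c j) = Qm j ∧ P (c j) * Qm j = Qm j) ∧
    (∑ i, ξ i • P i + r • ∑ j, η j • Qm j
      = ∑ j, (ξ (c j) + r * η j) • Qm j
        + ∑ i, ξ i • (P i - ∑ j ∈ Finset.univ.filter fun j => c j = i, Qm j)) ∧
    (∀ j, (∑ i, ξ i • P i + r • ∑ j', η j' • Qm j') * Qm j
        = (ξ (c j) + r * η j) • Qm j) ∧
    (∀ i, (∑ i', ξ i' • P i' + r • ∑ j, η j • Qm j) *
          (P i - ∑ j ∈ Finset.univ.filter fun j => c j = i, Qm j)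
        = ξ i • (P i - ∑ j ∈ Finset.univ.filter fun j => c j = i, Qm j)) :=
  stmt_19_general P hPsym hPidem hPorth Qm hQsym hQidem hQorth c hconf hzero ξ η r
end
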